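/- Let F be a Riemannian map between Riemannian manifolds with dim ker F_* = n₁ and rank F = n₂. Then the tension field of F satisfies τ(F) = −n₁ F_*(μ^{ker F_*}) + n₂ H_B, where μ^{ker F_*} is the mean curvature vector of the distribution ker F_* and H_B is the mean curvature vector field of range F_*. -/
import Mathlib

/-- Tension field of a Riemannian map: τ(F) = −n₁ F_*(μ^{ker F_*}) + n₂ H_B,
where μ^{ker F_*} is the mean curvature vector of ker F_* (over a vertical
orthonormal frame u, with Fs (u r) = 0), H_B the mean curvature vector field of
range F_* (over a horizontal orthonormal frame e), and τ(F) is the trace of the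
second fundamental form (∇F_*)(X,Y) = ∇^F_X F_*Y − F_*(∇^N_X Y). -/
theorem stmt_6 (VN VB : Type*) [AddCommGroup VN] [Module ℝ VN]
    [AddCommGroup VB] [Module ℝ VB]
    (n₁ n₂ : ℕ)
    (Fs : VN →ₗ[ℝ] VB) (nablaN : VN → VN → VN) (nablaF : VN → VB →ₗ[ℝ] VB)
    (u : Fin n₁ → VN) (e : Fin n₂ → VN)
    (hu : ∀ r, Fs (u r) = 0)
    (μ : VN) (H τ : VB)
    (hμ : (n₁ : ℝ) • Fs μ = ∑ r, Fs (nablaN (u r) (u r)))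
    (hH : (n₂ : ℝ) • H = ∑ p, (nablaF (e p) (Fs (e p)) - Fs (nablaN (e p) (e p))))
    (hτ : τ = (∑ r, (nablaF (u r) (Fs (u r)) - Fs (nablaN (u r) (u r)))) +
              ∑ p, (nablaF (e p) (Fs (e p)) - Fs (nablaN (e p) (e p)))) :
    τ = -(n₁ : ℝ) • Fs μ + (n₂ : ℝ) • H := by
  rw [hτ, ← hH, neg_smul, hμ]
  simp [hu, Finset.sum_sub_distrib]
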